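/- Let A be an associative unital ℝ-algebra, X^1,…,X^D ∈ A, and η an invertible symmetric real D×D matrix. With H^{ab}, H, □ and lowered indices as defined, for every index b the exact algebraic identity ∑_a [X_a, H^{ab}] = (1/2)·( ∑_{c,d} η_{cd} {□X^c, [X^b, X^d]} + (1/2)·[X^b, H] ) holds. (Paper eq. (Ward-cons), first line: [X_a,H^{ab}] = (1/2)({□X_c,[X^b,X^c]} + (1/2)[X^b,H]).) -/
import Mathlib

open Matrix

section WardAux

variable {A : Type*} [Ring A] [Algebra ℝ A] {D : ℕ}

def wcmm (x y : A) : A := x * y - y * x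
def wacm (x y : A) : A := x * y + y * x

def wS4 (η : Matrix (Fin D) (Fin D) ℝ) (f : Fin D × Fin D → Fin D × Fin D → A) : A :=
  ∑ p : Fin D × Fin D, ∑ q : Fin D × Fin D, (η p.1 p.2 * η q.1 q.2) • f p q

lemma wS4_nested (η : Matrix (Fin D) (Fin D) ℝ) (f : Fin D × Fin D → Fin D × Fin D → A) :
    wS4 η f = ∑ a, ∑ e, ∑ c, ∑ d, (η a e * η c d) • f (a, e) (c, d) := by
  simp only [wS4, Fintype.sum_prod_type]

lemma wS4_add (η : Matrix (Fin D) (Fin D) ℝ) (f g : Fin D × Fin D → Fin D × Fin D → A) :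
    wS4 η (fun p q => f p q + g p q) = wS4 η f + wS4 η g := by
  simp [wS4, smul_add, Finset.sum_add_distrib]

lemma wS4_sub (η : Matrix (Fin D) (Fin D) ℝ) (f g : Fin D × Fin D → Fin D × Fin D → A) :
    wS4 η (fun p q => f p q - g p q) = wS4 η f - wS4 η g := by
  simp [wS4, smul_sub, Finset.sum_sub_distrib]

lemma wS4_zero (η : Matrix (Fin D) (Fin D) ℝ) :
    wS4 η (fun _ _ => (0 : A)) = 0 := by simp [wS4]

lemma wS4_swap_pairs (η : Matrix (Fin D) (Fin D) ℝ) (f : Fin D × Fin D → Fin D × Fin D → A) :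
    wS4 η (fun p q => f q p) = wS4 η f := by
  rw [wS4, Finset.sum_comm]
  refine Finset.sum_congr rfl fun p _ => Finset.sum_congr rfl fun q _ => ?_
  rw [mul_comm]

lemma wS4_swap_fst {η : Matrix (Fin D) (Fin D) ℝ} (hs : η.IsSymm)
    (f : Fin D × Fin D → Fin D × Fin D → A) :
    wS4 η (fun p q => f p.swap q) = wS4 η f := by
  rw [wS4]
  rw [show (∑ p : Fin D × Fin D, ∑ q : Fin D × Fin D, (η p.1 p.2 * η q.1 q.2) • f p.swap q)
      = ∑ p : Fin D × Fin D, ∑ q : Fin D × Fin D, (η p.2 p.1 * η q.1 q.2) • f p q from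
    Fintype.sum_equiv (Equiv.prodComm _ _) _ _ (fun p => by simp)]
  rw [wS4]
  refine Finset.sum_congr rfl fun p _ => Finset.sum_congr rfl fun q _ => ?_
  rw [hs.apply p.1 p.2]

lemma wS4_swap_snd {η : Matrix (Fin D) (Fin D) ℝ} (hs : η.IsSymm)
    (f : Fin D × Fin D → Fin D × Fin D → A) :
    wS4 η (fun p q => f p q.swap) = wS4 η f := by
  rw [← wS4_swap_pairs η f, ← wS4_swap_pairs η (fun p q => f p q.swap)]
  exact wS4_swap_fst hs (fun p q => f q p)

lemma wcomm_sum_left {ι : Type*} (s : Finset ι) (f : ι → A) (y : A) :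
    (∑ i ∈ s, f i) * y - y * (∑ i ∈ s, f i) = ∑ i ∈ s, (f i * y - y * f i) := by
  simp [Finset.sum_mul, Finset.mul_sum, Finset.sum_sub_distrib]

lemma wcomm_sum_right {ι : Type*} (s : Finset ι) (f : ι → A) (x : A) :
    x * (∑ i ∈ s, f i) - (∑ i ∈ s, f i) * x = ∑ i ∈ s, (x * f i - f i * x) := by
  simp [Finset.sum_mul, Finset.mul_sum, Finset.sum_sub_distrib]

lemma wcomm_smul_left (r : ℝ) (y x : A) :
    (r • y) * x - x * (r • y) = r • (y * x - x * y) := by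
  simp [smul_mul_assoc, mul_smul_comm, smul_sub]

lemma wcomm_smul_right (r : ℝ) (y x : A) :
    x * (r • y) - (r • y) * x = r • (x * y - y * x) := by
  simp [smul_mul_assoc, mul_smul_comm, smul_sub]

lemma wacomm_sum_left {ι : Type*} (s : Finset ι) (f : ι → A) (y : A) :
    (∑ i ∈ s, f i) * y + y * (∑ i ∈ s, f i) = ∑ i ∈ s, (f i * y + y * f i) := by
  simp [Finset.sum_mul, Finset.mul_sum, Finset.sum_add_distrib]

lemma wacomm_smul_left (r : ℝ) (y x : A) :
    (r • y) * x + x * (r • y) = r • (y * x + x * y) := by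
  simp [smul_mul_assoc, mul_smul_comm, smul_add]

def wP (X : Fin D → A) (b : Fin D) (p q : Fin D × Fin D) : A :=
  wcmm (X p.2) (wacm (wcmm (X p.1) (X q.1)) (wcmm (X b) (X q.2)))

def wQ1 (X : Fin D → A) (b : Fin D) (p q : Fin D × Fin D) : A :=
  wacm (wcmm (X p.1) (wcmm (X p.2) (X q.1))) (wcmm (X b) (X q.2))

def wQ2 (X : Fin D → A) (b : Fin D) (p q : Fin D × Fin D) : A :=
  wcmm (X b) (wcmm (X p.1) (X q.1) * wcmm (X p.2) (X q.2))

def wG (y a e c d : A) : A :=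
  ((wcmm e (wacm (wcmm a c) (wcmm y d)) + wcmm e (wacm (wcmm a c) (wcmm y d)))
    - (wacm (wcmm a (wcmm e c)) (wcmm y d) + wacm (wcmm a (wcmm e c)) (wcmm y d)))
  - wcmm y (wcmm a c * wcmm e d)

lemma wkey (y a e c d : A) :
    wG y a e c d + wG y e a c d + wG y a e d c + wG y e a d c
    + wG y c d a e + wG y c d e a + wG y d c a e + wG y d c e a = 0 := by
  simp only [wG, wcmm, wacm]
  noncomm_ring

end WardAux

theorem ward_identity_H
    (A : Type*) [Ring A] [Algebra ℝ A] (D : ℕ)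
    (X : Fin D → A) (η : Matrix (Fin D) (Fin D) ℝ)
    (hηsymm : η.IsSymm) (hηu : IsUnit η)
    (Xl : Fin D → A) (hXl : ∀ a, Xl a = ∑ b, η a b • X b)
    (Hm : Fin D → Fin D → A)
    (hHm : ∀ a b, Hm a b = (1 / 2 : ℝ) • ∑ c, ∑ d, η c d •
      ((X a * X c - X c * X a) * (X b * X d - X d * X b)
        + (X b * X d - X d * X b) * (X a * X c - X c * X a)))
    (Hs : A)
    (hHs : Hs = ∑ a, ∑ b, ∑ c, ∑ d, (η a c * η b d) •
      ((X a * X b - X b * X a) * (X c * X d - X d * X c)))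
    (box : A → A)
    (hbox : ∀ Y, box Y = ∑ a, ∑ c, η a c •
      (X a * (X c * Y - Y * X c) - (X c * Y - Y * X c) * X a)) :
    ∀ b, ∑ a, (Xl a * Hm a b - Hm a b * Xl a) =
      (1 / 2 : ℝ) •
        ((∑ c, ∑ d, η c d • (box (X c) * (X b * X d - X d * X b)
            + (X b * X d - X d * X b) * box (X c)))
          + (1 / 2 : ℝ) • (X b * Hs - Hs * X b)) := by
  intro b
  -- Step 1: LHS in wS4 form
  have hL : ∑ a, (Xl a * Hm a b - Hm a b * Xl a) = (1 / 2 : ℝ) • wS4 η (wP X b) := by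
    simp only [hXl, hHm]
    simp only [wcomm_sum_left]
    simp only [wcomm_smul_left]
    simp only [wcomm_smul_right]
    simp only [wcomm_sum_right]
    simp only [wcomm_smul_right]
    simp only [wS4_nested, wP, wcmm, wacm, Finset.smul_sum, smul_smul]
    all_goals refine Finset.sum_congr rfl fun a _ => Finset.sum_congr rfl fun e _ =>
      Finset.sum_congr rfl fun c _ => Finset.sum_congr rfl fun d _ => ?_
    all_goals module
  -- Step 2: first RHS sum in wS4 form
  have hR1 : (∑ c, ∑ d, η c d • (box (X c) * (X b * X d - X d * X b)
      + (X b * X d - X d * X b) * box (X c))) = wS4 η (wQ1 X b) := by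
    rw [← wS4_swap_pairs η (wQ1 X b)]
    simp only [hbox]
    simp only [wacomm_sum_left]
    simp only [wacomm_smul_left]
    simp only [wS4_nested, wQ1, wcmm, wacm, Finset.smul_sum, smul_smul]
    all_goals refine Finset.sum_congr rfl fun c _ => Finset.sum_congr rfl fun d _ =>
      Finset.sum_congr rfl fun a _ => Finset.sum_congr rfl fun e _ => ?_
    all_goals module
  -- Step 3: Hs in wS4 form
  have hHs2 : Hs = wS4 η (fun p q => wcmm (X p.1) (X q.1) * wcmm (X p.2) (X q.2)) := by
    rw [hHs, wS4_nested]
    simp only [wcmm]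
    refine Finset.sum_congr rfl fun a _ => ?_
    exact Finset.sum_comm
  -- Step 4: commutator with Hs
  have hR2 : X b * Hs - Hs * X b = wS4 η (wQ2 X b) := by
    rw [hHs2]
    simp only [wS4, wcomm_sum_right, wcomm_smul_right, wQ2, wcmm]
  rw [hL, hR1, hR2]
  -- Step 5: the symmetrization argument
  set Gf : Fin D × Fin D → Fin D × Fin D → A :=
    fun p q => wG (X b) (X p.1) (X p.2) (X q.1) (X q.2) with hGf
  have eA : wS4 η (fun p q => Gf p.swap q) = wS4 η Gf := wS4_swap_fst hηsymm Gf
  have eB : wS4 η (fun p q => Gf p q.swap) = wS4 η Gf := wS4_swap_snd hηsymm Gf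
  have eC : wS4 η (fun p q => Gf p.swap q.swap) = wS4 η Gf :=
    (wS4_swap_fst hηsymm (fun p q => Gf p q.swap)).trans eB
  have eD : wS4 η (fun p q => Gf q p) = wS4 η Gf := wS4_swap_pairs η Gf
  have eE : wS4 η (fun p q => Gf q p.swap) = wS4 η Gf :=
    (wS4_swap_pairs η (fun p q => Gf p q.swap)).trans eB
  have eF : wS4 η (fun p q => Gf q.swap p) = wS4 η Gf :=
    (wS4_swap_pairs η (fun p q => Gf p.swap q)).trans eA
  have eG : wS4 η (fun p q => Gf q.swap p.swap) = wS4 η Gf :=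
    (wS4_swap_pairs η (fun p q => Gf p.swap q.swap)).trans eC
  have hpt : ∀ p q : Fin D × Fin D,
      Gf p q + Gf p.swap q + Gf p q.swap + Gf p.swap q.swap
      + Gf q p + Gf q p.swap + Gf q.swap p + Gf q.swap p.swap = 0 := by
    intro p q
    simp only [hGf, Prod.fst_swap, Prod.snd_swap]
    exact wkey (X b) (X p.1) (X p.2) (X q.1) (X q.2)
  have hbig : wS4 η (fun p q =>
      Gf p q + Gf p.swap q + Gf p q.swap + Gf p.swap q.swap
      + Gf q p + Gf q p.swap + Gf q.swap p + Gf q.swap p.swap) = 0 := by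
    have h0 : (fun (p q : Fin D × Fin D) =>
        Gf p q + Gf p.swap q + Gf p q.swap + Gf p.swap q.swap
        + Gf q p + Gf q p.swap + Gf q.swap p + Gf q.swap p.swap)
        = fun _ _ => (0 : A) := funext fun p => funext fun q => hpt p q
    rw [h0, wS4_zero]
  have hsum8 : wS4 η (fun p q =>
      Gf p q + Gf p.swap q + Gf p q.swap + Gf p.swap q.swap
      + Gf q p + Gf q p.swap + Gf q.swap p + Gf q.swap p.swap)
      = (8 : ℝ) • wS4 η Gf := by
    simp only [wS4_add]
    rw [eA, eB, eC, eD, eE, eF, eG]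
    module
  have hGz : wS4 η Gf = 0 := by
    have h0 : (8 : ℝ) • wS4 η Gf = 0 := hsum8.symm.trans hbig
    rcases smul_eq_zero.mp h0 with h | h
    · norm_num at h
    · exact h
  have hsplit : wS4 η Gf =
      ((wS4 η (wP X b) + wS4 η (wP X b)) - (wS4 η (wQ1 X b) + wS4 η (wQ1 X b)))
        - wS4 η (wQ2 X b) := by
    rw [show Gf = fun p q => ((wP X b p q + wP X b p q) - (wQ1 X b p q + wQ1 X b p q))
        - wQ2 X b p q from rfl]
    rw [wS4_sub η (fun p q => (wP X b p q + wP X b p q) - (wQ1 X b p q + wQ1 X b p q)) (wQ2 X b),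
      wS4_sub η (fun p q => wP X b p q + wP X b p q) (fun p q => wQ1 X b p q + wQ1 X b p q),
      wS4_add η (wP X b) (wP X b), wS4_add η (wQ1 X b) (wQ1 X b)]
  have hxy : wS4 η (wP X b) + wS4 η (wP X b)
      = (wS4 η (wQ1 X b) + wS4 η (wQ1 X b)) + wS4 η (wQ2 X b) := by
    have h1 := hsplit.symm.trans hGz
    rwa [sub_sub, sub_eq_zero] at h1
  calc (1 / 2 : ℝ) • wS4 η (wP X b)
      = (1 / 4 : ℝ) • (wS4 η (wP X b) + wS4 η (wP X b)) := by module
    _ = (1 / 4 : ℝ) • ((wS4 η (wQ1 X b) + wS4 η (wQ1 X b)) + wS4 η (wQ2 X b)) := by rw [hxy]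
    _ = (1 / 2 : ℝ) • (wS4 η (wQ1 X b) + (1 / 2 : ℝ) • wS4 η (wQ2 X b)) := by module
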